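/- Let X be a finite indecomposable quandle, let x₀ ∈ X, let G = Inn(X), let H = Stab_G(x₀), and let z = φ_{x₀}. Equip G with the quandle operation x ▷ y = x·z·x⁻¹·y·z⁻¹ and let e : G → X, g ↦ g(x₀), be the evaluation map. Then for all x, y ∈ G one has e(x) = e(y) if and only if xH = yH; consequently e induces a bijection G/H → X, xH ↦ e(x), which is an isomorphism of quandles when G/H carries the well-defined operation xH ▷ yH = x·z·x⁻¹·y·z⁻¹·H. In particular X is isomorphic to the homogeneous quandle (G, H, I_z), where I_z is conjugation by z. -/

import Mathlib

/-
Inner automorphisms are quandle automorphisms, so conjugating `z = φ_{x₀}` by `g` gives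
`φ_{g x₀}`. Hence `x z x⁻¹ y z⁻¹` sends `x₀` to `φ_{x x₀} (y x₀) = x x₀ ◃ y x₀`, i.e. the
evaluation map `G → X` is a quandle morphism. It is the orbit map of the transitive action of
`G` with stabilizer `H`, hence induces a bijection `G/H → X`, through which the operation on
`G/H` is well defined.
-/

open Quandles

/-- The inner group of a rack: the subgroup of the permutation group of `X`
generated by the left-translation permutations `φᵢ = Rack.act' i`. -/
def innerGroup (X : Type*) [Rack X] : Subgroup (Equiv.Perm X) :=
  Subgroup.closure (Set.range fun i : X => Rack.act' i)

lemma map_act_of_mem_innerGroup {X : Type*} [Rack X] {g : Equiv.Perm X}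
    (hg : g ∈ innerGroup X) (a b : X) : g (a ◃ b) = g a ◃ g b := by
  induction hg using Subgroup.closure_induction generalizing a b with
  | mem g hg =>
    obtain ⟨i, rfl⟩ := hg
    exact Rack.self_distrib
  | one => rfl
  | mul g h _ _ ihg ihh => simp only [Equiv.Perm.mul_apply, ihh, ihg]
  | inv g _ ih =>
    apply g.injective
    simp only [Equiv.Perm.coe_inv, Equiv.apply_symm_apply, ih]

lemma mul_act'_mul_inv {X : Type*} [Rack X] {g : Equiv.Perm X}
    (hg : ∀ a b : X, g (a ◃ b) = g a ◃ g b) (a : X) :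
    g * Rack.act' a * g⁻¹ = Rack.act' (g a) := by
  ext b
  simp [Equiv.Perm.mul_apply, Rack.act'_apply, hg]

lemma conj_act'_mul_mul_act'_inv_apply_self {X : Type*} [Quandle X] {g : Equiv.Perm X}
    (hg : ∀ a b : X, g (a ◃ b) = g a ◃ g b) (h : Equiv.Perm X) (a : X) :
    (g * Rack.act' a * g⁻¹ * h * (Rack.act' a)⁻¹) a = g a ◃ h a := by
  rw [mul_act'_mul_inv hg]
  simp [Equiv.Perm.mul_apply, Rack.invAct_apply, Quandle.fix_inv, Rack.act'_apply]

theorem stmt2_general {X : Type*} [Quandle X]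
    (hconn : ∀ x y : X, ∃ g ∈ innerGroup X, g x = y) (x₀ : X)
    (z : innerGroup X) (hz : (z : Equiv.Perm X) = Rack.act' x₀)
    (H : Subgroup ↥(innerGroup X))
    (hH : ∀ g : innerGroup X, g ∈ H ↔ (g : Equiv.Perm X) x₀ = x₀) :
    let e : innerGroup X → X := fun g => (g : Equiv.Perm X) x₀
    (∀ x y : innerGroup X,
      e x = e y ↔ (QuotientGroup.mk x : ↥(innerGroup X) ⧸ H) = QuotientGroup.mk y) ∧
    (∀ x x' y y' : innerGroup X,
      (QuotientGroup.mk x : ↥(innerGroup X) ⧸ H) = QuotientGroup.mk x' →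
      (QuotientGroup.mk y : ↥(innerGroup X) ⧸ H) = QuotientGroup.mk y' →
      (QuotientGroup.mk (x * z * x⁻¹ * y * z⁻¹) : ↥(innerGroup X) ⧸ H) =
        QuotientGroup.mk (x' * z * x'⁻¹ * y' * z⁻¹)) ∧
    ∃ f : (↥(innerGroup X) ⧸ H) → X, Function.Bijective f ∧
      (∀ x : innerGroup X, f (QuotientGroup.mk x) = e x) ∧
      (∀ x y : innerGroup X,
        f (QuotientGroup.mk (x * z * x⁻¹ * y * z⁻¹)) =
          f (QuotientGroup.mk x) ◃ f (QuotientGroup.mk y)) := by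
  intro e
  obtain rfl : H = MulAction.stabilizer (innerGroup X) x₀ := Subgroup.ext hH
  set f := MulAction.ofQuotientStabilizer (innerGroup X) x₀
  have f_mk (x : innerGroup X) : f (QuotientGroup.mk x) = e x := rfl
  have e_eq_iff (x y : innerGroup X) : e x = e y ↔
      (QuotientGroup.mk x : innerGroup X ⧸ MulAction.stabilizer _ x₀) = QuotientGroup.mk y := by
    rw [← f_mk, ← f_mk, (MulAction.injective_ofQuotientStabilizer _ x₀).eq_iff]
  have e_act (x y : innerGroup X) : e (x * z * x⁻¹ * y * z⁻¹) = e x ◃ e y := by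
    simpa [e, hz] using
      conj_act'_mul_mul_act'_inv_apply_self (map_act_of_mem_innerGroup x.2) y x₀
  refine ⟨e_eq_iff, fun x x' y y' hx hy => ?_, f, ⟨?_, fun t => ?_⟩, f_mk, e_act⟩
  · rw [← e_eq_iff] at hx hy ⊢
    rw [e_act, e_act, hx, hy]
  · exact MulAction.injective_ofQuotientStabilizer _ x₀
  · obtain ⟨g, hg, rfl⟩ := hconn x₀ t
    exact ⟨QuotientGroup.mk ⟨g, hg⟩, rfl⟩

/-- Let `X` be a finite indecomposable quandle, `x₀ ∈ X`, `G = Inn(X)`,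
`H = Stab_G(x₀)`, `z = φ_{x₀}`, and let `e : G → X`, `g ↦ g(x₀)`.  Then
`e x = e y ↔ xH = yH`; consequently `e` induces a bijection `f : G/H → X`,
the operation `xH ▷ yH = x·z·x⁻¹·y·z⁻¹·H` on `G/H` is well defined, and `f`
is an isomorphism from the homogeneous quandle `(G, H, I_z)` to `X`. -/
theorem stmt2 {X : Type*} [Fintype X] [Quandle X]
    (hconn : ∀ x y : X, ∃ g ∈ innerGroup X, g x = y) (x₀ : X)
    (z : innerGroup X) (hz : (z : Equiv.Perm X) = Rack.act' x₀)
    (H : Subgroup ↥(innerGroup X))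
    (hH : ∀ g : innerGroup X, g ∈ H ↔ (g : Equiv.Perm X) x₀ = x₀) :
    let e : innerGroup X → X := fun g => (g : Equiv.Perm X) x₀
    (∀ x y : innerGroup X,
      e x = e y ↔ (QuotientGroup.mk x : ↥(innerGroup X) ⧸ H) = QuotientGroup.mk y) ∧
    (∀ x x' y y' : innerGroup X,
      (QuotientGroup.mk x : ↥(innerGroup X) ⧸ H) = QuotientGroup.mk x' →
      (QuotientGroup.mk y : ↥(innerGroup X) ⧸ H) = QuotientGroup.mk y' →
      (QuotientGroup.mk (x * z * x⁻¹ * y * z⁻¹) : ↥(innerGroup X) ⧸ H) =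
        QuotientGroup.mk (x' * z * x'⁻¹ * y' * z⁻¹)) ∧
    ∃ f : (↥(innerGroup X) ⧸ H) → X, Function.Bijective f ∧
      (∀ x : innerGroup X, f (QuotientGroup.mk x) = e x) ∧
      (∀ x y : innerGroup X,
        f (QuotientGroup.mk (x * z * x⁻¹ * y * z⁻¹)) =
          f (QuotientGroup.mk x) ◃ f (QuotientGroup.mk y)) :=
  stmt2_general hconn x₀ z hz H hH
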